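/- Let w be a run in which every read event is preceded by a write event on the same variable. The relation ⊏_rf on events of w satisfies: (Partial order) ⊏_rf is irreflexive and transitive; (Intra-thread order) for events i before j in w with the same thread, i ⊏_rf j; (Reads-from) for events i before j with rf_w(j) = i, i ⊏_rf j; (Implied orders) if i, j, k are distinct events on the same variable with i and k writes, j a read, and rf_w(j) = i, then i ⊏_rf k implies j ⊏_rf k, and k ⊏_rf j implies k ⊏_rf i. -/
import Mathlib


namespace TraceTheory

inductive Op : Type
  | rd : Op
  | wr : Op
deriving DecidableEq

structure Lbl (T X : Type) : Type where
  thread : T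
  op : Op
  var : X
deriving DecidableEq

/-- A concurrent program run: a finite string over the concurrent alphabet. -/
abbrev Run (T X : Type) := List (Lbl T X)

/-- An event of a run: a symbol together with its occurrence number. -/
abbrev Event (T X : Type) := Lbl T X × ℕ

variable {T X : Type} [DecidableEq T] [DecidableEq X]

/-- Dependence: same thread, or same variable with at least one write. -/
def Dep (a b : Lbl T X) : Prop :=
  a.thread = b.thread ∨ (a.var = b.var ∧ (a.op = Op.wr ∨ b.op = Op.wr))

/-- The event at position `i` of run `w`. -/
def evAt (w : Run T X) (i : Fin w.length) : Event T X :=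
  (w.get i, (w.take (i : ℕ)).count (w.get i))

def HasEv (w : Run T X) (e : Event T X) : Prop := ∃ i : Fin w.length, evAt w i = e

/-- `e` occurs (strictly) before `f` in `w`. -/
def EvBefore (w : Run T X) (e f : Event T X) : Prop :=
  ∃ i j : Fin w.length, (i : ℕ) < (j : ℕ) ∧ evAt w i = e ∧ evAt w j = f

/-- Program order. -/
def po (w : Run T X) (e f : Event T X) : Prop :=
  e.1.thread = f.1.thread ∧ EvBefore w e f

/-- Reads-from: `f` is a read that observes the write `e` (the last write on
the same variable before `f`). -/
def rf (w : Run T X) (e f : Event T X) : Prop :=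
  e.1.op = Op.wr ∧ f.1.op = Op.rd ∧ e.1.var = f.1.var ∧
  ∃ i j : Fin w.length, evAt w i = e ∧ evAt w j = f ∧ (i : ℕ) < (j : ℕ) ∧
    ∀ k : Fin w.length, (i : ℕ) < (k : ℕ) → (k : ℕ) < (j : ℕ) →
      ¬ ((w.get k).op = Op.wr ∧ (w.get k).var = f.1.var)

/-- Every read is preceded by a write on the same variable. -/
def WellFormed (w : Run T X) : Prop :=
  ∀ j : Fin w.length, (w.get j).op = Op.rd →
    ∃ i : Fin w.length, (i : ℕ) < (j : ℕ) ∧ (w.get i).op = Op.wr ∧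
      (w.get i).var = (w.get j).var

/-- Reads-from equivalence. -/
def RfEquiv (w w' : Run T X) : Prop :=
  w.Perm w' ∧ po w = po w' ∧ rf w = rf w'

/-- A single Mazurkiewicz swap of two adjacent independent symbols. -/
inductive MazSwap : Run T X → Run T X → Prop
  | swap (u v : Run T X) (a b : Lbl T X) (h : ¬ Dep a b) :
      MazSwap (u ++ a :: b :: v) (u ++ b :: a :: v)

/-- Trace (Mazurkiewicz) equivalence: the smallest equivalence closed under swaps. -/
def MazEquiv (w w' : Run T X) : Prop := Relation.EqvGen MazSwap w w'

/-- The trace (happens-before) partial order of a run. -/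
def MazOrder (w : Run T X) : Event T X → Event T X → Prop :=
  Relation.TransGen (fun e f => EvBefore w e f ∧ Dep e.1 f.1)

/-- `B` is a block word (one write followed by reads of the same variable) that is
valid as a contiguous segment whose suffix (remainder of the run) is `s`:
no read after the block reads from the block's write. -/
def ValidBlockSeg (B s : Run T X) : Prop :=
  ∃ a rest, B = a :: rest ∧ a.op = Op.wr ∧
    (∀ b ∈ rest, b.op = Op.rd ∧ b.var = a.var) ∧
    ∀ j : Fin s.length, (s.get j).op = Op.rd → (s.get j).var = a.var →
      ∃ m : Fin s.length, (m : ℕ) < (j : ℕ) ∧ (s.get m).op = Op.wr ∧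
        (s.get m).var = a.var

def ThreadsDisjoint (B B' : Run T X) : Prop :=
  ∀ a ∈ B, ∀ b ∈ B', a.thread ≠ b.thread

/-- A single block-equivalence step (clause (i): block swap, clause (ii): event swap). -/
inductive BlkSwap : Run T X → Run T X → Prop
  | block (p B B' s : Run T X) (hB : ValidBlockSeg B (B' ++ s)) (hB' : ValidBlockSeg B' s)
      (hd : ThreadsDisjoint B B') :
      BlkSwap (p ++ B ++ B' ++ s) (p ++ B' ++ B ++ s)
  | single (p s : Run T X) (a b : Lbl T X) (ht : a.thread ≠ b.thread)
      (h : a.var ≠ b.var ∨ (a.op = Op.rd ∧ b.op = Op.rd)) :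
      BlkSwap (p ++ a :: b :: s) (p ++ b :: a :: s)

/-- Block equivalence: smallest reflexive transitive relation closed under the swaps. -/
def BlkEquiv : Run T X → Run T X → Prop := Relation.ReflTransGen BlkSwap

/-- The set of events of the segment `B` of a run, given the prefix `p` preceding it. -/
def segEvents (p B : Run T X) : Set (Event T X) :=
  { e | ∃ i : Fin B.length, e = (B.get i, ((p ++ B.take (i : ℕ)).count (B.get i))) }

/-- Block-equivalence steps where block swaps are restricted to blocks from `𝔹`. -/
inductive BlkSwapIn (𝔹 : Set (Set (Event T X))) : Run T X → Run T X → Prop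
  | block (p B B' s : Run T X) (hB : ValidBlockSeg B (B' ++ s)) (hB' : ValidBlockSeg B' s)
      (hBmem : segEvents p B ∈ 𝔹) (hB'mem : segEvents (p ++ B) B' ∈ 𝔹)
      (hd : ThreadsDisjoint B B') :
      BlkSwapIn 𝔹 (p ++ B ++ B' ++ s) (p ++ B' ++ B ++ s)
  | single (p s : Run T X) (a b : Lbl T X) (ht : a.thread ≠ b.thread)
      (h : a.var ≠ b.var ∨ (a.op = Op.rd ∧ b.op = Op.rd)) :
      BlkSwapIn 𝔹 (p ++ a :: b :: s) (p ++ b :: a :: s)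

/-- Block equivalence restricted to the set of blocks `𝔹`. -/
def BlkEquivIn (𝔹 : Set (Set (Event T X))) : Run T X → Run T X → Prop :=
  Relation.ReflTransGen (BlkSwapIn 𝔹)

/-- A valid block of `w` (as a set of events): a write event together with exactly
the reads of `w` that read from it. -/
def IsValidBlockOf (w : Run T X) (S : Set (Event T X)) : Prop :=
  ∃ e : Event T X, HasEv w e ∧ e.1.op = Op.wr ∧ S = insert e { f | rf w e f }

def ValidBlocks (w : Run T X) (𝔹 : Set (Set (Event T X))) : Prop :=
  ∀ S ∈ 𝔹, IsValidBlockOf w S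

/-- Block `S` occurs as a contiguous subword of `u`. -/
def SerialIn (u : Run T X) (S : Set (Event T X)) : Prop :=
  ∃ p B s, u = p ++ B ++ s ∧ segEvents p B = S

/-- Liberal atomicity of a run `v` with respect to a set of blocks `𝔹`. -/
def LiberallyAtomic (v : Run T X) (𝔹 : Set (Set (Event T X))) : Prop :=
  ∃ u, BlkEquivIn 𝔹 u v ∧ ∀ S ∈ 𝔹, SerialIn u S

/-- Conflict serializability of a run `v` with respect to a set of blocks `𝔹`. -/
def ConflictSerializable (v : Run T X) (𝔹 : Set (Set (Event T X))) : Prop :=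
  ∃ u, MazEquiv u v ∧ ∀ S ∈ 𝔹, SerialIn u S

/-- The block-happens-before order `≺_𝔹`. -/
def Bhb (w : Run T X) (𝔹 : Set (Set (Event T X))) : Event T X → Event T X → Prop :=
  Relation.TransGen (fun e f =>
    EvBefore w e f ∧ Dep e.1 f.1 ∧
    ¬ (e.1.thread ≠ f.1.thread ∧ ∃ B ∈ 𝔹, ∃ B' ∈ 𝔹, B ≠ B' ∧ e ∈ B ∧ f ∈ B'))

/-- The saturated order `⪻_𝔹` on events (`Sum.inl`) and blocks (`Sum.inr`). -/
inductive Sat (w : Run T X) (𝔹 : Set (Set (Event T X))) :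
    (Event T X ⊕ Set (Event T X)) → (Event T X ⊕ Set (Event T X)) → Prop
  | base {e f : Event T X} : Bhb w 𝔹 e f → Sat w 𝔹 (Sum.inl e) (Sum.inl f)
  | toBlk {e f : Event T X} {B B' : Set (Event T X)} :
      e.1.var = f.1.var → B ∈ 𝔹 → B' ∈ 𝔹 → e ∈ B → f ∈ B' → B ≠ B' →
      Sat w 𝔹 (Sum.inl e) (Sum.inl f) → Sat w 𝔹 (Sum.inr B) (Sum.inr B')
  | ofBlk {B B' : Set (Event T X)} {e f : Event T X} :
      Sat w 𝔹 (Sum.inr B) (Sum.inr B') → e ∈ B → f ∈ B' →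
      Sat w 𝔹 (Sum.inl e) (Sum.inl f)

/-- The event part of the saturated order `⪻_𝔹`. -/
def SatEv (w : Run T X) (𝔹 : Set (Set (Event T X))) (e f : Event T X) : Prop :=
  Sat w 𝔹 (Sum.inl e) (Sum.inl f)

def SameVarBlocks (B B' : Set (Event T X)) : Prop :=
  ∃ x : X, (∀ e ∈ B, e.1.var = x) ∧ (∀ e ∈ B', e.1.var = x)

/-- No two distinct blocks of `𝔹` on the same variable overlap in `v`. -/
def NoOverlap (v : Run T X) (𝔹 : Set (Set (Event T X))) : Prop :=
  ∀ B ∈ 𝔹, ∀ B' ∈ 𝔹, B ≠ B' → SameVarBlocks B B' →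
    (∀ e ∈ B, ∀ f ∈ B', EvBefore v e f) ∨ (∀ e ∈ B, ∀ f ∈ B', EvBefore v f e)

/-- `v` is a proper linearization (of the events of `w`) of the order `ord`. -/
def ProperLin (w : Run T X) (𝔹 : Set (Set (Event T X)))
    (ord : Event T X → Event T X → Prop) (v : Run T X) : Prop :=
  w.Perm v ∧ (∀ e f, ord e f → EvBefore v e f) ∧ NoOverlap v 𝔹


/-- `e` is causally ordered before `f` under reads-from equivalence:
`e` occurs before `f` in every reads-from equivalent run. -/
def CausOrd (w : Run T X) (e f : Event T X) : Prop :=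
  ∀ w', RfEquiv w w' → EvBefore w' e f

/-- `e` and `f` are causally concurrent under reads-from equivalence. -/
def CausConc (w : Run T X) (e f : Event T X) : Prop :=
  ¬ CausOrd w e f ∧ ¬ CausOrd w f e

theorem count_take_lt' {α : Type*} [DecidableEq α] {l : List α} {i j : ℕ}
    (hij : i < j) (hj : j ≤ l.length) :
    (l.take i).count (l[i]'(lt_of_lt_of_le hij hj)) <
      (l.take j).count (l[i]'(lt_of_lt_of_le hij hj)) := by
  have hi : i < l.length := lt_of_lt_of_le hij hj
  set a := l[i]'hi with ha
  have h1 : l.take j = l.take i ++ (l.take j).drop i := by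
    conv_lhs => rw [← List.take_append_drop i (l.take j)]
    rw [List.take_take, min_eq_left hij.le]
  rw [h1, List.count_append]
  have hlen : 0 < ((l.take j).drop i).length := by
    rw [List.length_drop, List.length_take]; omega
  have h0 : ((l.take j).drop i)[0]'hlen = a := by
    rw [List.getElem_drop, List.getElem_take]
    simp [ha]
  have hmem : a ∈ (l.take j).drop i := h0 ▸ List.getElem_mem hlen
  have : 0 < ((l.take j).drop i).count a := List.count_pos_iff.mpr hmem
  omega

theorem evAt_inj {w : Run T X} {i j : Fin w.length} (h : evAt w i = evAt w j) :
    i = j := by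
  have h1 : w.get i = w.get j := congrArg Prod.fst h
  have h2 : (w.take (i : ℕ)).count (w.get i) = (w.take (j : ℕ)).count (w.get j) :=
    congrArg Prod.snd h
  by_contra hne
  rcases lt_or_gt_of_ne (fun hc => hne (Fin.ext hc) : (i : ℕ) ≠ (j : ℕ)) with hlt | hlt
  · have := count_take_lt' (l := w) hlt j.2.le
    simp only [List.get_eq_getElem] at h1 h2
    rw [h1] at h2 this
    omega
  · have := count_take_lt' (l := w) hlt i.2.le
    simp only [List.get_eq_getElem] at h1 h2
    rw [h1] at h2
    omega

theorem before_pos {w : Run T X} {e f : Event T X} (h : EvBefore w e f)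
    {i j : Fin w.length} (hi : evAt w i = e) (hj : evAt w j = f) : (i : ℕ) < (j : ℕ) := by
  obtain ⟨i', j', hlt, hi', hj'⟩ := h
  have := evAt_inj (hi'.trans hi.symm)
  have := evAt_inj (hj'.trans hj.symm)
  omega

theorem rfEquiv_refl (w : Run T X) : RfEquiv w w := ⟨List.Perm.refl w, rfl, rfl⟩

theorem get_of_evAt {w : Run T X} {i : Fin w.length} {e : Event T X}
    (h : evAt w i = e) : w.get i = e.1 := congrArg Prod.fst h

/-- properties of the causal-order relation `⊏_rf` under
reads-from equivalence: it is a strict partial order containing program order,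
reads-from, and closed under the implied orders. -/
theorem properties_causal_order_rf
    (T X : Type) [DecidableEq T] [DecidableEq X]
    (w : Run T X) (hwf : WellFormed w) :
    -- (Partial order): irreflexive and transitive
    (∀ e : Event T X, ¬ CausOrd w e e) ∧
    (∀ e f g : Event T X, CausOrd w e f → CausOrd w f g → CausOrd w e g) ∧
    -- (Intra-thread order)
    (∀ e f : Event T X, e.1.thread = f.1.thread → EvBefore w e f → CausOrd w e f) ∧
    -- (Reads-from)
    (∀ e f : Event T X, rf w e f → CausOrd w e f) ∧
    -- (Implied orders)
    (∀ i j k : Event T X, HasEv w i → HasEv w j → HasEv w k →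
      i ≠ j → j ≠ k → i ≠ k →
      i.1.var = j.1.var → j.1.var = k.1.var →
      i.1.op = Op.wr → k.1.op = Op.wr → j.1.op = Op.rd →
      rf w i j →
      (CausOrd w i k → CausOrd w j k) ∧ (CausOrd w k j → CausOrd w k i)) := by
  refine ⟨?_, ?_, ?_, ?_, ?_⟩
  · -- irreflexivity
    intro e h
    obtain ⟨i, j, hlt, hi, hj⟩ := h w (rfEquiv_refl w)
    have := evAt_inj (hi.trans hj.symm)
    omega
  · -- transitivity
    intro e f g h1 h2 w' hw'
    obtain ⟨i, j, hij, hi, hj⟩ := h1 w' hw'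
    obtain ⟨j', k, hjk, hj', hk⟩ := h2 w' hw'
    have hjj : j = j' := evAt_inj (hj.trans hj'.symm)
    exact ⟨i, k, by omega, hi, hk⟩
  · -- intra-thread
    intro e f ht hb w' hw'
    have hpo : po w e f := ⟨ht, hb⟩
    rw [hw'.2.1] at hpo
    exact hpo.2
  · -- reads-from
    intro e f hrf w' hw'
    rw [hw'.2.2] at hrf
    obtain ⟨_, _, _, i, j, hi, hj, hij, _⟩ := hrf
    exact ⟨i, j, hij, hi, hj⟩
  · -- implied orders
    intro i j k _ _ _ hij hjk hik hv1 hv2 hwi hwk hrj hrf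
    constructor
    · intro hord w' hw'
      have hrf' : rf w' i j := by rw [← hw'.2.2]; exact hrf
      obtain ⟨_, _, _, a, b, ha, hb, hab, hnw⟩ := hrf'
      obtain ⟨p, q, hpq, hp, hq⟩ := hord w' hw'
      have hpa : p = a := evAt_inj (hp.trans ha.symm)
      rcases lt_trichotomy (b : ℕ) (q : ℕ) with h | h | h
      · exact ⟨b, q, h, hb, hq⟩
      · exact absurd (hb.symm.trans ((Fin.ext h : b = q) ▸ hq)) hjk
      · exact absurd ⟨(get_of_evAt hq).symm ▸ hwk,
          (get_of_evAt hq).symm ▸ hv2.symm⟩ (hnw q (by omega) h)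
    · intro hord w' hw'
      have hrf' : rf w' i j := by rw [← hw'.2.2]; exact hrf
      obtain ⟨_, _, _, a, b, ha, hb, hab, hnw⟩ := hrf'
      obtain ⟨p, q, hpq, hp, hq⟩ := hord w' hw'
      have hqb : q = b := evAt_inj (hq.trans hb.symm)
      rcases lt_trichotomy (p : ℕ) (a : ℕ) with h | h | h
      · exact ⟨p, a, h, hp, ha⟩
      · exact absurd ((hp.symm.trans ((Fin.ext h : p = a) ▸ ha)).symm) hik
      · exact absurd ⟨(get_of_evAt hp).symm ▸ hwk,
          (get_of_evAt hp).symm ▸ hv2.symm⟩ (hnw p h (by omega))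

end TraceTheory
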